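/- For any multi-indices a and b of positive integers and N ≥ 0, R_N(a; b) = Z_N(A ⧢ B), where A and B are the words over {ω_0, ω_1} encoding a and b, Z_N is the linear map sending a word to its associated finite multiple zeta value, and ⧢ is the shuffle product. In other words, the finite shuffle identity R_N(a; b) = ζ_N(a ⧢ b) holds. -/

import Mathlib

/-- `zetaN N [a₁, …, a_r]` is the finite multiple zeta value
`ζ_N(a₁,…,a_r) = Σ_{N ≥ n₁ > ⋯ > n_r ≥ 1} Π 1/nᵢ^{aᵢ}`; `ζ_N` of the empty index is `1`. -/
def zetaN : ℕ → List ℕ → ℚ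
  | _, [] => 1
  | N, a :: as => ∑ n ∈ Finset.Icc 1 N, zetaN (n - 1) as / (n : ℚ) ^ a

/-- The shuffle product of two words, as a multiset of words (counting multiplicities). -/
def shuffle {α : Type*} : List α → List α → Multiset (List α)
  | [], ys => {ys}
  | xs, [] => {xs}
  | x :: xs, y :: ys =>
      ((shuffle xs (y :: ys)).map (x :: ·)) + ((shuffle (x :: xs) ys).map (y :: ·))
termination_by xs ys => xs.length + ys.length

/-- The word `ω₀^{a₁-1} ω₁ ⋯ ω₀^{a_r-1} ω₁` over `{ω₀, ω₁} = {false, true}`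
associated to a multi-index. -/
def wordOf (a : List ℕ) : List Bool :=
  a.foldr (fun c w => List.replicate (c - 1) false ++ [true] ++ w) []

/-- The multi-index associated to a word over `{ω₀, ω₁} = {false, true}`
(inverse of `wordOf` on admissible words). -/
def wordToIndex : List Bool → List ℕ
  | [] => []
  | false :: w =>
      match wordToIndex w with
      | [] => []
      | c :: cs => (c + 1) :: cs
  | true :: w => 1 :: wordToIndex w

/-- `R N a b` is the quantity `R_N(a;b)`; for empty first index it is interpreted,
consistently with the symmetry `R_N(a;b)=R_N(b;a)`, as `ζ_N(b)`. -/
def R (N : ℕ) : List ℕ → List ℕ → ℚ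
  | [], b => zetaN N b
  | a₁ :: as, b => ∑ k ∈ Finset.Icc 1 N, zetaN (N - k) b * zetaN (k - 1) as / (k : ℚ) ^ a₁

/-! ### Auxiliary machinery -/

open Finset

@[simp] lemma shuffle_nil_left {α : Type*} (v : List α) : shuffle [] v = {v} := by
  rw [shuffle]

@[simp] lemma shuffle_nil_right {α : Type*} (u : List α) : shuffle u [] = {u} := by
  cases u <;> simp [shuffle]

lemma shuffle_cons_cons {α : Type*} (x y : α) (u v : List α) :
    shuffle (x::u) (y::v)
      = ((shuffle u (y::v)).map (x :: ·)) + ((shuffle (x::u) v).map (y :: ·)) := by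
  rw [shuffle]

lemma shuffle_comm {α : Type*} : ∀ (u v : List α), shuffle u v = shuffle v u
  | [], v => by simp
  | x :: u, [] => by simp
  | x :: u, y :: v => by
    rw [shuffle_cons_cons, shuffle_cons_cons, shuffle_comm u (y :: v),
      shuffle_comm (x :: u) v, add_comm]
termination_by u v => u.length + v.length

lemma shuffle_length {α : Type*} :
    ∀ (u v w : List α), w ∈ shuffle u v → w.length = u.length + v.length
  | [], v, w, h => by simp at h; subst h; simp
  | x :: u, [], w, h => by simp at h; subst h; simp
  | x :: u, y :: v, w, h => by
    rw [shuffle_cons_cons] at h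
    rcases Multiset.mem_add.1 h with h' | h' <;>
      obtain ⟨w', hw', rfl⟩ := Multiset.mem_map.1 h'
    · have := shuffle_length u (y :: v) w' hw'
      simp [this]; omega
    · have := shuffle_length (x :: u) v w' hw'
      simp [this]; omega
termination_by u v => u.length + v.length

lemma shuffle_ne_nil {α : Type*} {u v w : List α} (h : w ∈ shuffle u v)
    (huv : u ≠ [] ∨ v ≠ []) : w ≠ [] := by
  have hlen := shuffle_length u v w h
  intro hw
  subst hw
  simp only [List.length_nil] at hlen
  rcases huv with h' | h' <;> have hp := List.length_pos_iff.2 h' <;> omega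

/-- admissible words: those not ending with `false` (i.e. empty or ending in `true`). -/
def Adm (w : List Bool) : Prop := w.getLast? ≠ some false

@[simp] lemma adm_nil : Adm [] := by simp [Adm]

lemma adm_cons {x : Bool} {w : List Bool} (h : Adm (x :: w)) : Adm w := by
  cases w with
  | nil => simp
  | cons y w' => rwa [Adm, List.getLast?_cons_cons] at h

lemma adm_false_ne {w : List Bool} (h : Adm (false :: w)) : w ≠ [] := by
  rintro rfl; exact h (by simp [List.getLast?])

lemma adm_of_cons {x : Bool} {w : List Bool} (h : Adm w) (hw : w ≠ []) : Adm (x :: w) := by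
  cases w with
  | nil => exact absurd rfl hw
  | cons y w' => rwa [Adm, List.getLast?_cons_cons]

lemma adm_true_cons {w : List Bool} (h : Adm w) : Adm (true :: w) := by
  cases w with
  | nil => simp [Adm, List.getLast?]
  | cons y w' => exact adm_of_cons h (by simp)

lemma shuffle_adm :
    ∀ (u v w : List Bool), w ∈ shuffle u v → Adm u → Adm v → Adm w
  | [], v, w, h, _, hv => by simp at h; subst h; exact hv
  | x :: u, [], w, h, hu, _ => by simp at h; subst h; exact hu
  | x :: u, y :: v, w, h, hu, hv => by
    rw [shuffle_cons_cons] at h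
    rcases Multiset.mem_add.1 h with h' | h' <;>
      obtain ⟨w', hw', rfl⟩ := Multiset.mem_map.1 h'
    · have hadm := shuffle_adm u (y :: v) w' hw' (adm_cons hu) hv
      exact adm_of_cons hadm (shuffle_ne_nil hw' (Or.inr (by simp)))
    · have hadm := shuffle_adm (x :: u) v w' hw' hu (adm_cons hv)
      exact adm_of_cons hadm (shuffle_ne_nil hw' (Or.inl (by simp)))
termination_by u v => u.length + v.length

/-! ### The refined zeta functions on words -/

/-- `Zeq n w` : the iterated sum attached to the word `w` where the variable of the first
letter is pinned to the value `n`. -/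
def Zeq : ℕ → List Bool → ℚ
  | _, [] => 1
  | n, false :: w => Zeq n w / n
  | n, true :: w => (if w = [] then 1 else ∑ m ∈ Finset.Icc 1 (n-1), Zeq m w) / n

/-- `Zle N w` : the iterated sum attached to the word `w` with all variables `≤ N`. -/
def Zle (N : ℕ) (w : List Bool) : ℚ :=
  if w = [] then 1 else ∑ n ∈ Finset.Icc 1 N, Zeq n w

@[simp] lemma Zeq_nil (n : ℕ) : Zeq n [] = 1 := rfl

@[simp] lemma Zeq_false (n : ℕ) (w : List Bool) : Zeq n (false :: w) = Zeq n w / n := by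
  rw [Zeq]

@[simp] lemma Zeq_true (n : ℕ) (w : List Bool) : Zeq n (true :: w) = Zle (n-1) w / n := by
  rw [Zeq, Zle]

@[simp] lemma Zle_nil (N : ℕ) : Zle N [] = 1 := rfl

lemma Zle_of_ne (N : ℕ) {w : List Bool} (h : w ≠ []) :
    Zle N w = ∑ n ∈ Finset.Icc 1 N, Zeq n w := by
  rw [Zle, if_neg h]

lemma Zeq_block (n : ℕ) (w : List Bool) :
    ∀ j, Zeq n (List.replicate j false ++ true :: w) = Zle (n-1) w / (n:ℚ)^(j+1)
  | 0 => by simp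
  | j+1 => by
    rw [List.replicate_succ, List.cons_append, Zeq_false, Zeq_block n w j,
      div_div, ← pow_succ]

@[simp] lemma wordOf_nil : wordOf [] = [] := rfl

lemma wordOf_cons (c : ℕ) (as : List ℕ) :
    wordOf (c :: as) = List.replicate (c-1) false ++ true :: wordOf as := by
  simp [wordOf]

lemma wordOf_cons_ne (c : ℕ) (as : List ℕ) : wordOf (c :: as) ≠ [] := by
  simp [wordOf_cons]

lemma adm_append {l w : List Bool} (h : Adm w) (hw : w ≠ []) : Adm (l ++ w) := by
  induction l with
  | nil => exact h
  | cons x l ih => exact adm_of_cons ih (by simp [hw])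

lemma adm_wordOf : ∀ a : List ℕ, Adm (wordOf a)
  | [] => by simp
  | c :: as => by
    rw [wordOf_cons]
    exact adm_append (adm_true_cons (adm_wordOf as)) (by simp)

lemma zetaN_cons (N : ℕ) (c : ℕ) (as : List ℕ) :
    zetaN N (c :: as) = ∑ n ∈ Finset.Icc 1 N, zetaN (n - 1) as / (n : ℚ) ^ c := by
  rw [zetaN]

lemma zetaN_eq_Zle : ∀ a : List ℕ, (∀ c ∈ a, 1 ≤ c) → ∀ N, zetaN N a = Zle N (wordOf a)
  | [], _, N => by simp [zetaN]
  | c :: as, h, N => by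
    have hc : 1 ≤ c := h c (by simp)
    rw [zetaN_cons, wordOf_cons, Zle_of_ne _ (by simp)]
    refine Finset.sum_congr rfl fun n _ => ?_
    rw [Zeq_block, zetaN_eq_Zle as (fun x hx => h x (by simp [hx])) (n-1),
      show c - 1 + 1 = c by omega]

lemma wordToIndex_pos : ∀ w : List Bool, ∀ c ∈ wordToIndex w, 1 ≤ c
  | [] => by simp [wordToIndex]
  | true :: w => by
    intro c hc
    rw [wordToIndex] at hc
    rcases List.mem_cons.1 hc with rfl | hc
    · omega
    · exact wordToIndex_pos w c hc
  | false :: w => by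
    intro c hc
    rw [wordToIndex] at hc
    rcases h : wordToIndex w with _ | ⟨c', cs⟩ <;> rw [h] at hc
    · simp at hc
    · rcases List.mem_cons.1 hc with rfl | hc
      · omega
      · exact wordToIndex_pos w c (by rw [h]; simp [hc])

lemma wordToIndex_ne_nil : ∀ {w : List Bool}, Adm w → w ≠ [] → wordToIndex w ≠ []
  | [], _, h => absurd rfl h
  | true :: w, _, _ => by rw [wordToIndex]; simp
  | false :: w, h, _ => by
    rw [wordToIndex]
    have h1 := wordToIndex_ne_nil (adm_cons h) (adm_false_ne h)
    rcases hw : wordToIndex w with _ | ⟨c, cs⟩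
    · exact absurd hw h1
    · simp

lemma wordOf_wordToIndex : ∀ w : List Bool, Adm w → wordOf (wordToIndex w) = w
  | [], _ => rfl
  | true :: w, h => by
    rw [wordToIndex, wordOf_cons, wordOf_wordToIndex w (adm_cons h)]
    simp
  | false :: w, h => by
    have h1 := wordToIndex_ne_nil (adm_cons h) (adm_false_ne h)
    rw [wordToIndex]
    rcases hw : wordToIndex w with _ | ⟨c, cs⟩
    · exact absurd hw h1
    · have hc : 1 ≤ c := wordToIndex_pos w c (by rw [hw]; simp)
      have hrec := wordOf_wordToIndex w (adm_cons h)
      rw [hw, wordOf_cons] at hrec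
      rw [wordOf_cons, show c + 1 - 1 = (c-1) + 1 by omega, List.replicate_succ,
        List.cons_append, hrec]

lemma wordToIndex_replicate (w : List Bool) :
    ∀ j, wordToIndex (List.replicate j false ++ true :: w) = (j+1) :: wordToIndex w
  | 0 => by simp [wordToIndex]
  | j+1 => by
    rw [List.replicate_succ, List.cons_append, wordToIndex, wordToIndex_replicate w j]

lemma wordToIndex_wordOf : ∀ a : List ℕ, (∀ c ∈ a, 1 ≤ c) → wordToIndex (wordOf a) = a
  | [], _ => rfl
  | c :: as, h => by
    rw [wordOf_cons, wordToIndex_replicate, wordToIndex_wordOf as fun x hx => h x (by simp [hx]),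
      show c - 1 + 1 = c from by have := h c (by simp); omega]

lemma zetaN_wordToIndex (N : ℕ) (w : List Bool) (h : Adm w) :
    zetaN N (wordToIndex w) = Zle N w := by
  rw [zetaN_eq_Zle _ (wordToIndex_pos w) N, wordOf_wordToIndex w h]

/-! ### Sum manipulation lemmas -/

lemma msum_div (M : Multiset (List Bool)) (f : List Bool → ℚ) (c : ℚ) :
    ((M.map (fun w => f w / c))).sum = (M.map f).sum / c := by
  induction M using Multiset.induction with
  | empty => simp
  | cons a M ih => simp [ih, add_div]

lemma msum_sum (M : Multiset (List Bool)) (s : Finset ℕ) (f : ℕ → List Bool → ℚ) :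
    (M.map (fun w => ∑ n ∈ s, f n w)).sum = ∑ n ∈ s, (M.map (fun w => f n w)).sum := by
  induction M using Multiset.induction with
  | empty => simp
  | cons a M ih => simp [ih, Finset.sum_add_distrib]

lemma sum_reflect (n : ℕ) (f : ℕ → ℚ) :
    ∑ k ∈ Finset.Icc 1 (n-1), f (n-k) = ∑ k ∈ Finset.Icc 1 (n-1), f k := by
  refine Finset.sum_nbij' (fun k => n - k) (fun k => n - k) ?_ ?_ ?_ ?_ ?_ <;>
    intro a ha <;> simp [Finset.mem_Icc] at ha ⊢ <;> omega

lemma sum_tri (N : ℕ) (g : ℕ → ℕ → ℚ) :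
    ∑ n ∈ Finset.Icc 1 N, ∑ k ∈ Finset.Icc 1 (n-1), g k (n-k)
      = ∑ k ∈ Finset.Icc 1 N, ∑ m ∈ Finset.Icc 1 (N-k), g k m := by
  induction N with
  | zero => simp
  | succ N ih =>
    rw [Finset.sum_Icc_succ_top (by omega : 1 ≤ N + 1), ih,
      Finset.sum_Icc_succ_top (by omega : 1 ≤ N + 1)]
    have h0 : (∑ m ∈ Finset.Icc 1 (N + 1 - (N+1)), g (N+1) m) = 0 := by simp
    rw [h0, add_zero, show N + 1 - 1 = N from rfl]
    have h1 : ∀ k ∈ Finset.Icc 1 N,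
        (∑ m ∈ Finset.Icc 1 (N + 1 - k), g k m)
          = (∑ m ∈ Finset.Icc 1 (N - k), g k m) + g k (N + 1 - k) := by
      intro k hk
      simp only [Finset.mem_Icc] at hk
      rw [show N + 1 - k = (N - k) + 1 by omega, Finset.sum_Icc_succ_top (by omega)]
    rw [Finset.sum_congr rfl h1, Finset.sum_add_distrib]

lemma algA (P Q : ℚ) (k m n : ℕ) (hk : k ≠ 0) (hm : m ≠ 0) (h : k + m = n) :
    (P * (Q / (m:ℚ)) + Q * (P / (k:ℚ))) / (n:ℚ) = P / (k:ℚ) * (Q / (m:ℚ)) := by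
  have hK : (k:ℚ) ≠ 0 := Nat.cast_ne_zero.2 hk
  have hM : (m:ℚ) ≠ 0 := Nat.cast_ne_zero.2 hm
  have hKM : (k:ℚ) + (m:ℚ) = (n:ℚ) := by exact_mod_cast congrArg (Nat.cast : ℕ → ℚ) h
  rw [← hKM]
  field_simp

lemma algB (P Q : ℚ) (k m n : ℕ) (hk : k ≠ 0) (hm : m ≠ 0) (h : k + m = n) :
    (P * (Q / (m:ℚ)) + P / (k:ℚ) * Q) / (n:ℚ) = P / (k:ℚ) * (Q / (m:ℚ)) := by
  rw [show P * (Q / (m:ℚ)) + P / (k:ℚ) * Q = P * (Q / (m:ℚ)) + Q * (P / (k:ℚ)) by ring]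
  exact algA P Q k m n hk hm h

/-! ### The key induction -/

/-- `Esum n u v = Σ_{w ∈ u ⧢ v} Zeq n w`. -/
def Esum (n : ℕ) (u v : List Bool) : ℚ := ((shuffle u v).map (Zeq n)).sum

/-- `Ssum N u v = Σ_{w ∈ u ⧢ v} Zle N w`. -/
def Ssum (N : ℕ) (u v : List Bool) : ℚ := ((shuffle u v).map (Zle N)).sum

lemma Ssum_comm (N : ℕ) (u v : List Bool) : Ssum N u v = Ssum N v u := by
  rw [Ssum, Ssum, shuffle_comm]

def StarP (s : ℕ) : Prop :=
  ∀ u v : List Bool, u.length + v.length ≤ s → Adm u → Adm v → u ≠ [] → v ≠ [] →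
    ∀ n, Esum n u v = ∑ k ∈ Finset.Icc 1 (n-1), Zeq k u * Zeq (n-k) v

def MainP (s : ℕ) : Prop :=
  ∀ u v : List Bool, u.length + v.length ≤ s → Adm u → Adm v → u ≠ [] → v ≠ [] →
    ∀ N, Ssum N u v = ∑ k ∈ Finset.Icc 1 N, Zeq k u * Zle (N-k) v

lemma main_of_star {s : ℕ} (h : StarP s) : MainP s := by
  intro u v hlen hu hv hu0 hv0 N
  have h1 : Ssum N u v = ∑ n ∈ Finset.Icc 1 N, Esum n u v := by
    rw [Ssum,
      Multiset.map_congr rfl fun w hw => Zle_of_ne N (shuffle_ne_nil hw (Or.inl hu0)),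
      msum_sum]
    rfl
  rw [h1, Finset.sum_congr rfl fun n _ => h u v hlen hu hv hu0 hv0 n,
    sum_tri N (fun k m => Zeq k u * Zeq m v)]
  refine Finset.sum_congr rfl fun k _ => ?_
  rw [← Finset.mul_sum, Zle_of_ne _ hv0]

lemma lemL {s : ℕ} (hmain : MainP s) (p q : List Bool)
    (hlen : p.length + q.length ≤ s) (hp : Adm p) (hq : Adm q) (hq0 : q ≠ []) (N : ℕ) :
    Ssum N p q = ∑ m ∈ Finset.Icc 1 N, Zle (N-m) p * Zeq m q := by
  rcases eq_or_ne p [] with rfl | hp0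
  · rw [Ssum, shuffle_nil_left, Multiset.map_singleton, Multiset.sum_singleton,
      Zle_of_ne _ hq0]
    simp
  · rw [Ssum_comm, hmain q p (by omega) hq hp hq0 hp0 N]
    exact Finset.sum_congr rfl fun m _ => mul_comm _ _

lemma star_step {s : ℕ} (ihs : StarP s) (ihm : MainP s) : StarP (s+1) := by
  intro u v hlen hu hv hu0 hv0 n
  rcases u with _ | ⟨x, u'⟩; · exact absurd rfl hu0
  rcases v with _ | ⟨y, v'⟩; · exact absurd rfl hv0
  have hlen' : u'.length + (y :: v').length ≤ s := by simp at hlen ⊢; omega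
  have hlen'' : (x :: u').length + v'.length ≤ s := by simp at hlen ⊢; omega
  have hexp : Esum n (x :: u') (y :: v') =
      ((shuffle u' (y :: v')).map (fun w => Zeq n (x :: w))).sum
      + ((shuffle (x :: u') v' ).map (fun w => Zeq n (y :: w))).sum := by
    rw [Esum, shuffle_cons_cons, Multiset.map_add, Multiset.sum_add,
      Multiset.map_map, Multiset.map_map]
    rfl
  cases x <;> cases y
  · -- (false, false)
    have hu'0 : u' ≠ [] := adm_false_ne hu
    have hv'0 : v' ≠ [] := adm_false_ne hv
    have t1 : ((shuffle u' (false :: v')).map (fun w => Zeq n (false :: w))).sum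
        = Esum n u' (false :: v') / n := by
      simp only [Zeq_false]; rw [msum_div]; rfl
    have t2 : ((shuffle (false :: u') v').map (fun w => Zeq n (false :: w))).sum
        = Esum n (false :: u') v' / n := by
      simp only [Zeq_false]; rw [msum_div]; rfl
    rw [hexp, t1, t2, ihs u' (false :: v') hlen' (adm_cons hu) hv hu'0 hv0 n,
      ihs (false :: u') v' hlen'' hu (adm_cons hv) hu0 hv'0 n,
      ← add_div, ← Finset.sum_add_distrib, Finset.sum_div]
    refine Finset.sum_congr rfl fun k hk => ?_
    simp only [Finset.mem_Icc] at hk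
    simp only [Zeq_false]
    exact algB _ _ k (n-k) n (by omega) (by omega) (by omega)
  · -- (false, true)
    have hu'0 : u' ≠ [] := adm_false_ne hu
    have t1 : ((shuffle u' (true :: v')).map (fun w => Zeq n (false :: w))).sum
        = Esum n u' (true :: v') / n := by
      simp only [Zeq_false]; rw [msum_div]; rfl
    have t2 : ((shuffle (false :: u') v').map (fun w => Zeq n (true :: w))).sum
        = Ssum (n-1) (false :: u') v' / n := by
      simp only [Zeq_true]; rw [msum_div]; rfl
    have hL : Ssum (n-1) (false :: u') v' = Ssum (n-1) v' (false :: u') := Ssum_comm _ _ _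
    rw [hexp, t1, t2, ihs u' (true :: v') hlen' (adm_cons hu) hv hu'0 hv0 n, hL,
      lemL ihm v' (false :: u') (by simp at hlen ⊢; omega) (adm_cons hv) hu hu0 (n-1),
      ← add_div, ← Finset.sum_add_distrib, Finset.sum_div]
    refine Finset.sum_congr rfl fun k hk => ?_
    simp only [Finset.mem_Icc] at hk
    rw [show n - 1 - k = (n - k) - 1 by omega]
    simp only [Zeq_false, Zeq_true]
    exact algA _ _ k (n-k) n (by omega) (by omega) (by omega)
  · -- (true, false)
    have hv'0 : v' ≠ [] := adm_false_ne hv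
    have t1 : ((shuffle u' (false :: v')).map (fun w => Zeq n (true :: w))).sum
        = Ssum (n-1) u' (false :: v') / n := by
      simp only [Zeq_true]; rw [msum_div]; rfl
    have t2 : ((shuffle (true :: u') v').map (fun w => Zeq n (false :: w))).sum
        = Esum n (true :: u') v' / n := by
      simp only [Zeq_false]; rw [msum_div]; rfl
    have hrefl := (sum_reflect n (fun m => Zle (n-1-m) u' * Zeq m (false :: v'))).symm
    rw [hexp, t1, t2,
      lemL ihm u' (false :: v') hlen' (adm_cons hu) hv hv0 (n-1), hrefl,
      ihs (true :: u') v' hlen'' hu (adm_cons hv) hu0 hv'0 n,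
      ← add_div, ← Finset.sum_add_distrib, Finset.sum_div]
    refine Finset.sum_congr rfl fun k hk => ?_
    simp only [Finset.mem_Icc] at hk
    rw [show n - 1 - (n - k) = k - 1 by omega]
    simp only [Zeq_false, Zeq_true]
    exact algB _ _ k (n-k) n (by omega) (by omega) (by omega)
  · -- (true, true)
    have t1 : ((shuffle u' (true :: v')).map (fun w => Zeq n (true :: w))).sum
        = Ssum (n-1) u' (true :: v') / n := by
      simp only [Zeq_true]; rw [msum_div]; rfl
    have t2 : ((shuffle (true :: u') v').map (fun w => Zeq n (true :: w))).sum
        = Ssum (n-1) (true :: u') v' / n := by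
      simp only [Zeq_true]; rw [msum_div]; rfl
    have hL : Ssum (n-1) (true :: u') v' = Ssum (n-1) v' (true :: u') := Ssum_comm _ _ _
    have hrefl := (sum_reflect n (fun m => Zle (n-1-m) u' * Zeq m (true :: v'))).symm
    rw [hexp, t1, t2,
      lemL ihm u' (true :: v') hlen' (adm_cons hu) hv hv0 (n-1), hrefl, hL,
      lemL ihm v' (true :: u') (by simp at hlen ⊢; omega) (adm_cons hv) hu hu0 (n-1),
      ← add_div, ← Finset.sum_add_distrib, Finset.sum_div]
    refine Finset.sum_congr rfl fun k hk => ?_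
    simp only [Finset.mem_Icc] at hk
    rw [show n - 1 - (n - k) = k - 1 by omega, show n - 1 - k = (n - k) - 1 by omega]
    simp only [Zeq_true]
    exact algA _ _ k (n-k) n (by omega) (by omega) (by omega)

lemma star_and_main : ∀ s : ℕ, StarP s ∧ MainP s := by
  intro s
  induction s with
  | zero =>
    have h : ∀ (u v : List Bool), u.length + v.length ≤ 0 → u ≠ [] → False := by
      intro u v hl hu
      have := List.length_pos_iff.mpr hu
      omega
    exact ⟨fun u v hl _ _ hu _ _ => absurd hl (fun hh => h u v hh hu),
      fun u v hl _ _ hu _ _ => absurd hl (fun hh => h u v hh hu)⟩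
  | succ s ih =>
    have hstar := star_step ih.1 ih.2
    exact ⟨hstar, main_of_star hstar⟩

/-! ### Main theorem -/

/-- The finite shuffle identity `R_N(a;b) = ζ_N(a ⧢ b) = Z_N(A ⧢ B)`, where `Z_N` is
the linear extension of `w ↦ ζ_N(wordToIndex w)` to the shuffle multiset. -/
theorem finite_shuffle_identity (N : ℕ) (a b : List ℕ)
    (ha : ∀ x ∈ a, 1 ≤ x) (hb : ∀ x ∈ b, 1 ≤ x) :
    R N a b =
      ((shuffle (wordOf a) (wordOf b)).map (fun w => zetaN N (wordToIndex w))).sum := by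
  rcases a with _ | ⟨a₁, as⟩
  · rw [wordOf_nil, shuffle_nil_left, Multiset.map_singleton, Multiset.sum_singleton,
      wordToIndex_wordOf b hb]
    rfl
  rcases b with _ | ⟨b₁, bs⟩
  · rw [wordOf_nil, shuffle_nil_right, Multiset.map_singleton, Multiset.sum_singleton,
      wordToIndex_wordOf _ ha]
    rw [R, zetaN_cons]
    refine Finset.sum_congr rfl fun k _ => ?_
    simp [zetaN]
  · -- both nonempty
    have ha1 : 1 ≤ a₁ := ha a₁ (by simp)
    have hA : Adm (wordOf (a₁ :: as)) := adm_wordOf _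
    have hB : Adm (wordOf (b₁ :: bs)) := adm_wordOf _
    have hA0 : wordOf (a₁ :: as) ≠ [] := wordOf_cons_ne _ _
    have hB0 : wordOf (b₁ :: bs) ≠ [] := wordOf_cons_ne _ _
    have hRHS : ((shuffle (wordOf (a₁ :: as)) (wordOf (b₁ :: bs))).map
        (fun w => zetaN N (wordToIndex w))).sum = Ssum N (wordOf (a₁ :: as)) (wordOf (b₁ :: bs)) := by
      rw [Ssum, Multiset.map_congr rfl fun w hw =>
        zetaN_wordToIndex N w (shuffle_adm _ _ w hw hA hB)]
    rw [hRHS, (star_and_main _).2 _ _ le_rfl hA hB hA0 hB0 N, R]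
    refine Finset.sum_congr rfl fun k hk => ?_
    rw [show wordOf (a₁ :: as) = List.replicate (a₁ - 1) false ++ true :: wordOf as from
        wordOf_cons _ _,
      Zeq_block, show a₁ - 1 + 1 = a₁ by omega,
      ← zetaN_eq_Zle as (fun x hx => ha x (by simp [hx])) (k-1),
      ← zetaN_eq_Zle (b₁ :: bs) hb (N-k)]
    ring
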